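/- arXiv:2107.14675 — 2 statements merged into one kernel-verified Lean document; each statement's English description precedes it below -/
import Mathlib

section
/- Suppose f^[α] ∈ I^[Σ] is not top s-reducible by G^[Σ]. Then every regular S-polynomial formed between f^[α] and any element of G^[Σ] ∪ {f^[α]} has signature strictly larger than s(α). -/
open Finsupp

/-- The free algebra `K⟨X⟩`, realized as the monoid algebra of the free monoid. -/
abbrev FreeAlg (K X : Type*) [Field K] := MonoidAlgebra K (FreeMonoid X)

/-- Module monomials `a εᵢ b` of the free bimodule of rank `r`. -/
structure MonMod (X : Type*) (r : ℕ) where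
  left : FreeMonoid X
  idx : Fin r
  right : FreeMonoid X

/-- The free bimodule `Σ = (K⟨X⟩ ⊗ K⟨X⟩)^r`, realized as the span of module monomials. -/
abbrev FreeBimod (K X : Type*) [Field K] (r : ℕ) := MonMod X r →₀ K

/-- Two-sided action of a pair of words on a module monomial: `a·(c εᵢ d)·b = (ac) εᵢ (db)`. -/
def act {X : Type*} {r : ℕ} (a b : FreeMonoid X) (μ : MonMod X r) : MonMod X r :=
  ⟨a * μ.left, μ.idx, μ.right * b⟩

/-- The monomial `w` as an element of the free algebra. -/
noncomputable def mon (K : Type*) [Field K] {X : Type*} (w : FreeMonoid X) : FreeAlg K X :=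
  MonoidAlgebra.of K (FreeMonoid X) w

/-- The evaluation homomorphism `Σ → K⟨X⟩`, `εᵢ ↦ fᵢ`. -/
noncomputable def evalS {K X : Type*} [Field K] {r : ℕ} (F : Fin r → FreeAlg K X)
    (α : FreeBimod K X r) : FreeAlg K X :=
  α.sum fun μ c => c • (mon K μ.left * F μ.idx * mon K μ.right)

section Orders

variable {K X : Type*} [Field K] [LinearOrder (FreeMonoid X)] {r : ℕ}
  [LinearOrder (MonMod X r)]

/-- The signature of a module element: the largest module monomial of its support
(`⊥` for the zero element). -/
noncomputable def sigW (α : FreeBimod K X r) : WithBot (MonMod X r) := α.support.max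

/-- The leading monomial of a nonzero polynomial (junk value `1` for `0`). -/
noncomputable def lmon (p : FreeAlg K X) : FreeMonoid X :=
  if h : p.coeff.support.Nonempty then p.coeff.support.max' h else 1

/-- The leading coefficient. -/
noncomputable def lcoeff (p : FreeAlg K X) : K := p.coeff (lmon p)

/-- The leading term. -/
noncomputable def lterm (p : FreeAlg K X) : FreeAlg K X :=
  MonoidAlgebra.single (lmon p) (lcoeff p)

/-- `f^[α]` is top s-reducible by the set `G^[Σ]`. -/
def TopSRed (G : Set (FreeAlg K X × FreeBimod K X r)) (f : FreeAlg K X)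
    (α : FreeBimod K X r) : Prop :=
  ∃ g γ, (g, γ) ∈ G ∧ g ≠ 0 ∧ ∃ a b : FreeMonoid X,
    a * lmon g * b = lmon f ∧ WithBot.map (act a b) (sigW γ) ≤ sigW α

/-- `f^[α]` is singular top s-reducible by `G^[Σ]`. -/
def SingTopSRed (G : Set (FreeAlg K X × FreeBimod K X r)) (f : FreeAlg K X)
    (α : FreeBimod K X r) : Prop :=
  f ≠ 0 ∧ ∃ g γ, (g, γ) ∈ G ∧ g ≠ 0 ∧ ∃ a b : FreeMonoid X,
    a * lmon g * b = lmon f ∧ WithBot.map (act a b) (sigW γ) = sigW α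

/-- `f^[α]` admits a regular s-reduction by `G^[Σ]`. -/
def RegSRedible (G : Set (FreeAlg K X × FreeBimod K X r)) (f : FreeAlg K X)
    (α : FreeBimod K X r) : Prop :=
  ∃ g γ, (g, γ) ∈ G ∧ g ≠ 0 ∧ ∃ a b : FreeMonoid X,
    a * lmon g * b ∈ f.coeff.support ∧ WithBot.map (act a b) (sigW γ) < sigW α

/-- `f^[α]` admits a regular *top* s-reduction by `G^[Σ]`. -/
def RegTopSRedible (G : Set (FreeAlg K X × FreeBimod K X r)) (f : FreeAlg K X)
    (α : FreeBimod K X r) : Prop :=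
  f ≠ 0 ∧ ∃ g γ, (g, γ) ∈ G ∧ g ≠ 0 ∧ ∃ a b : FreeMonoid X,
    a * lmon g * b = lmon f ∧ WithBot.map (act a b) (sigW γ) < sigW α

/-- Result of one s-reduction step of `f^[α]` by `a g^[γ] b`. -/
noncomputable def sredResult (f : FreeAlg K X) (α : FreeBimod K X r)
    (g : FreeAlg K X) (γ : FreeBimod K X r) (a b : FreeMonoid X) :
    FreeAlg K X × FreeBimod K X r :=
  (f - (f.coeff (a * lmon g * b) * (lcoeff g)⁻¹) • (mon K a * g * mon K b),
   α - (f.coeff (a * lmon g * b) * (lcoeff g)⁻¹) • Finsupp.mapDomain (act a b) γ)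

/-- One s-reduction step by `G^[Σ]`. -/
def SRedStep (G : Set (FreeAlg K X × FreeBimod K X r))
    (p q : FreeAlg K X × FreeBimod K X r) : Prop :=
  ∃ g γ, (g, γ) ∈ G ∧ g ≠ 0 ∧ ∃ a b : FreeMonoid X,
    a * lmon g * b ∈ p.1.coeff.support ∧ WithBot.map (act a b) (sigW γ) ≤ sigW p.2 ∧
    q = sredResult p.1 p.2 g γ a b

/-- One *regular* s-reduction step by `G^[Σ]`. -/
def RegSRedStep (G : Set (FreeAlg K X × FreeBimod K X r))
    (p q : FreeAlg K X × FreeBimod K X r) : Prop :=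
  ∃ g γ, (g, γ) ∈ G ∧ g ≠ 0 ∧ ∃ a b : FreeMonoid X,
    a * lmon g * b ∈ p.1.coeff.support ∧ WithBot.map (act a b) (sigW γ) < sigW p.2 ∧
    q = sredResult p.1 p.2 g γ a b

/-- `p` s-reduces to zero by `G^[Σ]`. -/
def SRedToZero (G : Set (FreeAlg K X × FreeBimod K X r))
    (p : FreeAlg K X × FreeBimod K X r) : Prop :=
  ∃ σ : FreeBimod K X r, Relation.ReflTransGen (SRedStep G) p (0, σ)

/-- `p` regular s-reduces to zero by `G^[Σ]`. -/
def RegSRedToZero (G : Set (FreeAlg K X × FreeBimod K X r))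
    (p : FreeAlg K X × FreeBimod K X r) : Prop :=
  ∃ σ : FreeBimod K X r, Relation.ReflTransGen (RegSRedStep G) p (0, σ)

/-- `G^[Σ] ⊆ I^[Σ]`: labelled polynomials with nonzero polynomial part. -/
def InLab (F : Fin r → FreeAlg K X) (G : Set (FreeAlg K X × FreeBimod K X r)) : Prop :=
  ∀ p ∈ G, p.1 = evalS F p.2 ∧ p.1 ≠ 0

/-- `G^[Σ]` is a labelled Gröbner basis of `I^[Σ]`. -/
def LabGB (F : Fin r → FreeAlg K X) (G : Set (FreeAlg K X × FreeBimod K X r)) : Prop :=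
  InLab F G ∧ ∀ (f : FreeAlg K X) (α : FreeBimod K X r), f = evalS F α → SRedToZero G (f, α)

/-- `G^[Σ]` is a labelled Gröbner basis of `I^[Σ]` up to signature `σ`. -/
def LabGBUpTo (F : Fin r → FreeAlg K X) (G : Set (FreeAlg K X × FreeBimod K X r))
    (σ : MonMod X r) : Prop :=
  InLab F G ∧ ∀ (f : FreeAlg K X) (α : FreeBimod K X r), f = evalS F α →
    sigW α < (σ : WithBot (MonMod X r)) → SRedToZero G (f, α)

/-- `G^[Σ]` is a *minimal* labelled Gröbner basis of `I^[Σ]`. -/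
def MinLabGB (F : Fin r → FreeAlg K X) (G : Set (FreeAlg K X × FreeBimod K X r)) : Prop :=
  LabGB F G ∧ ∀ p ∈ G, ¬ TopSRed (G \ {p}) p.1 p.2

end Orders

/-- `σ` is the (module part of the) regular S-polynomial of a regular overlap or
inclusion ambiguity of `f^[α]` and `g^[β]` (with `f` on the left). -/
def RegSPol {K X : Type*} [Field K] [LinearOrder (FreeMonoid X)] {r : ℕ}
    [LinearOrder (MonMod X r)]
    (f : FreeAlg K X) (α : FreeBimod K X r) (g : FreeAlg K X) (β : FreeBimod K X r)
    (σ : FreeBimod K X r) : Prop :=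
  (∃ A B C : FreeMonoid X, A ≠ 1 ∧ B ≠ 1 ∧ C ≠ 1 ∧ lmon f = A * B ∧ lmon g = B * C ∧
      WithBot.map (act 1 C) (sigW α) ≠ WithBot.map (act A 1) (sigW β) ∧
      σ = (lcoeff f)⁻¹ • Finsupp.mapDomain (act 1 C) α -
          (lcoeff g)⁻¹ • Finsupp.mapDomain (act A 1) β) ∨
  (∃ A C : FreeMonoid X, f ≠ g ∧ lmon f = A * lmon g * C ∧
      sigW α ≠ WithBot.map (act A C) (sigW β) ∧
      σ = (lcoeff f)⁻¹ • α - (lcoeff g)⁻¹ • Finsupp.mapDomain (act A C) β)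

/-! Multiplying a module monomial by words never decreases it, since a strictly monotone
self-map of a well-order is inflationary, and it strictly increases it unless both words are
trivial. The signature of a regular S-polynomial dominates both signatures it is built from,
as these differ and so cannot cancel. In an overlap, one of them is `s(α)` times a nontrivial
word; in an inclusion it is either `s(α)` times a nontrivial word or the signature of a `g^[β]`
whose leading monomial divides `lm(f)`, and then it exceeds `s(α)` because `f^[α]` is not top
s-reducible. -/

section

variable {K X : Type*} [Field K] {r : ℕ}

lemma act_injective (a b : FreeMonoid X) : Function.Injective (act (r := r) a b) := by
  rintro ⟨l₁, i₁, r₁⟩ ⟨l₂, i₂, r₂⟩ h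
  simp only [act, MonMod.mk.injEq] at h
  exact MonMod.mk.injEq .. ▸ ⟨mul_left_cancel h.1, h.2.1, mul_right_cancel h.2.2⟩

lemma act_one_one : act (1 : FreeMonoid X) 1 = (id : MonMod X r → MonMod X r) := by
  funext μ
  simp [act]

lemma eq_one_and_eq_one_of_act_eq_self {a b : FreeMonoid X} {μ : MonMod X r}
    (h : act a b μ = μ) : a = 1 ∧ b = 1 := by
  obtain ⟨l, i, w⟩ := μ
  simp only [act, MonMod.mk.injEq] at h
  exact ⟨mul_eq_right.1 h.1, mul_eq_left.1 h.2.2⟩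

section ModuleOrder

variable [LinearOrder (MonMod X r)] [WellFoundedLT (MonMod X r)] {a b : FreeMonoid X}

lemma le_act (hmono : Monotone (act (r := r) a b)) (μ : MonMod X r) : μ ≤ act a b μ :=
  (hmono.strictMono_of_injective (act_injective a b)).le_apply

lemma lt_map_act (hmono : Monotone (act (r := r) a b)) (hab : a ≠ 1 ∨ b ≠ 1)
    {s : WithBot (MonMod X r)} (hs : s ≠ ⊥) : s < s.map (act a b) := by
  lift s to MonMod X r using hs
  refine WithBot.coe_lt_coe.2 ((le_act hmono s).lt_of_ne fun h => ?_)
  obtain ⟨rfl, rfl⟩ := eq_one_and_eq_one_of_act_eq_self h.symm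
  simp at hab

end ModuleOrder

section Signature

variable [LinearOrder (MonMod X r)]

lemma sigW_ne_bot {α : FreeBimod K X r} (hα : α ≠ 0) : sigW α ≠ ⊥ := by
  simpa [sigW, Finset.max_eq_bot] using hα

lemma sigW_smul {c : K} (hc : c ≠ 0) (x : FreeBimod K X r) : sigW (c • x) = sigW x := by
  rw [sigW, sigW, Finsupp.support_smul_eq hc]

lemma sigW_mapDomain {φ : MonMod X r → MonMod X r} (hinj : Function.Injective φ)
    (hmono : Monotone φ) (x : FreeBimod K X r) :
    sigW (Finsupp.mapDomain φ x) = (sigW x).map φ := by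
  classical
  rw [sigW, sigW, Finsupp.mapDomain_support_of_injective hinj]
  rcases x.support.eq_empty_or_nonempty with h | h
  · simp [h]
  · rw [← Finset.coe_max' (h.image φ), ← Finset.coe_max' h, Finset.max'_image hmono,
      WithBot.map_coe]

lemma sigW_mapDomain_act {a b : FreeMonoid X} (hmono : Monotone (act (r := r) a b))
    (x : FreeBimod K X r) : sigW (Finsupp.mapDomain (act a b) x) = (sigW x).map (act a b) :=
  sigW_mapDomain (act_injective a b) hmono x

lemma sigW_le_sigW_sub_of_lt {x y : FreeBimod K X r} (h : sigW y < sigW x) :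
    sigW x ≤ sigW (x - y) := by
  obtain ⟨m, hm⟩ := WithBot.ne_bot_iff_exists.1 (h.ne_bot)
  have hmx : m ∈ x.support := Finset.mem_of_max hm.symm
  have hym : y m = 0 := by
    by_contra hy
    exact (Finset.le_max (Finsupp.mem_support_iff.2 hy)).not_gt (hm ▸ h)
  rw [← hm]
  refine Finset.le_max (Finsupp.mem_support_iff.2 ?_)
  simpa [hym] using Finsupp.mem_support_iff.1 hmx

lemma max_sigW_le_sigW_sub {x y : FreeBimod K X r} (h : sigW x ≠ sigW y) :
    max (sigW x) (sigW y) ≤ sigW (x - y) := by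
  rcases h.lt_or_gt with hlt | hlt
  · rw [max_eq_right hlt.le, ← neg_sub]
    simpa only [sigW, Finsupp.support_neg] using sigW_le_sigW_sub_of_lt hlt
  · rw [max_eq_left hlt.le]
    exact sigW_le_sigW_sub_of_lt hlt

lemma max_sigW_le_sigW_smul_sub_smul {c d : K} (hc : c ≠ 0) (hd : d ≠ 0)
    {x y : FreeBimod K X r} (h : sigW x ≠ sigW y) :
    max (sigW x) (sigW y) ≤ sigW (c • x - d • y) := by
  rw [← sigW_smul hc x, ← sigW_smul hd y] at h ⊢
  exact max_sigW_le_sigW_sub h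

end Signature

lemma lcoeff_ne_zero [LinearOrder (FreeMonoid X)] {p : FreeAlg K X} (hp : p ≠ 0) :
    lcoeff p ≠ 0 := by
  have hs : p.coeff.support.Nonempty :=
    Finsupp.support_nonempty_iff.2 (mt MonoidAlgebra.coeff_eq_zero.1 hp)
  have hmem : lmon p ∈ p.coeff.support := by
    rw [lmon, dif_pos hs]
    exact p.coeff.support.max'_mem hs
  exact Finsupp.mem_support_iff.1 hmem

lemma TopSRed.mono [LinearOrder (FreeMonoid X)] [LinearOrder (MonMod X r)]
    {G H : Set (FreeAlg K X × FreeBimod K X r)} {f : FreeAlg K X} {α : FreeBimod K X r}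
    (hGH : G ⊆ H) : TopSRed G f α → TopSRed H f α :=
  fun ⟨g, γ, hg, hred⟩ => ⟨g, γ, hGH hg, hred⟩

section RegSPol

variable [LinearOrder (FreeMonoid X)] [LinearOrder (MonMod X r)] [WellFoundedLT (MonMod X r)]
  {f g : FreeAlg K X} {α β σ : FreeBimod K X r}

lemma sigW_lt_of_regSPol_left (hmod : ∀ a b : FreeMonoid X, Monotone (act (r := r) a b))
    (hf : f ≠ 0) (hg : g ≠ 0) (hα : α ≠ 0) (hirred : f ≠ g → ¬ TopSRed {(g, β)} f α)
    (h : RegSPol f α g β σ) : sigW α < sigW σ := by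
  have hcf := inv_ne_zero (lcoeff_ne_zero hf)
  have hcg := inv_ne_zero (lcoeff_ne_zero hg)
  rcases h with ⟨A, B, C, -, -, hC, -, -, hreg, rfl⟩ | ⟨A, C, hfg, hlm, hreg, rfl⟩
  · calc sigW α < (sigW α).map (act 1 C) := lt_map_act (hmod 1 C) (.inr hC) (sigW_ne_bot hα)
      _ = sigW (Finsupp.mapDomain (act 1 C) α) := (sigW_mapDomain_act (hmod 1 C) α).symm
      _ ≤ max _ _ := le_max_left _ _
      _ ≤ _ := max_sigW_le_sigW_smul_sub_smul hcf hcg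
        (by rwa [sigW_mapDomain_act (hmod 1 C), sigW_mapDomain_act (hmod A 1)])
  · calc sigW α < (sigW β).map (act A C) :=
          lt_of_not_ge fun hle => hirred hfg ⟨g, β, rfl, hg, A, C, hlm.symm, hle⟩
      _ = sigW (Finsupp.mapDomain (act A C) β) := (sigW_mapDomain_act (hmod A C) β).symm
      _ ≤ max (sigW α) _ := le_max_right _ _
      _ ≤ _ := max_sigW_le_sigW_smul_sub_smul hcf hcg (by rwa [sigW_mapDomain_act (hmod A C)])

lemma sigW_lt_of_regSPol_right (hmod : ∀ a b : FreeMonoid X, Monotone (act (r := r) a b))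
    (hf : f ≠ 0) (hg : g ≠ 0) (hα : α ≠ 0) (hirred : g ≠ f → ¬ TopSRed {(g, β)} f α)
    (h : RegSPol g β f α σ) : sigW α < sigW σ := by
  have hcf := inv_ne_zero (lcoeff_ne_zero hf)
  have hcg := inv_ne_zero (lcoeff_ne_zero hg)
  rcases h with ⟨A, B, C, hA, -, -, -, -, hreg, rfl⟩ | ⟨A, C, hgf, hlm, hreg, rfl⟩
  · calc sigW α < (sigW α).map (act A 1) := lt_map_act (hmod A 1) (.inl hA) (sigW_ne_bot hα)
      _ = sigW (Finsupp.mapDomain (act A 1) α) := (sigW_mapDomain_act (hmod A 1) α).symm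
      _ ≤ max _ _ := le_max_right _ _
      _ ≤ _ := max_sigW_le_sigW_smul_sub_smul hcg hcf
        (by rwa [sigW_mapDomain_act (hmod 1 C), sigW_mapDomain_act (hmod A 1)])
  · have hσ := max_sigW_le_sigW_smul_sub_smul hcg hcf
      (x := β) (y := Finsupp.mapDomain (act A C) α) (by rwa [sigW_mapDomain_act (hmod A C)])
    by_cases hAC : A = 1 ∧ C = 1
    · obtain ⟨rfl, rfl⟩ := hAC
      have hβ : sigW α < sigW β := lt_of_not_ge fun hle =>
        hirred hgf ⟨g, β, rfl, hg, 1, 1, by simp [hlm], by rwa [act_one_one, WithBot.map_id]⟩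
      exact hβ.trans_le ((le_max_left _ _).trans hσ)
    · calc sigW α < (sigW α).map (act A C) :=
            lt_map_act (hmod A C) (not_and_or.1 hAC) (sigW_ne_bot hα)
        _ = sigW (Finsupp.mapDomain (act A C) α) := (sigW_mapDomain_act (hmod A C) α).symm
        _ ≤ _ := (le_max_right _ _).trans hσ

end RegSPol

end

theorem sig_spol_gt_of_not_topSRed_general {K X : Type*} [Field K] {r : ℕ}
    [LinearOrder (FreeMonoid X)]
    [LinearOrder (MonMod X r)] [WellFoundedLT (MonMod X r)]
    (hmod : ∀ (a b : FreeMonoid X) (μ ν : MonMod X r), μ ≤ ν → act a b μ ≤ act a b ν)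
    (F : Fin r → FreeAlg K X) (G : Set (FreeAlg K X × FreeBimod K X r))
    (hG : InLab F G)
    (f : FreeAlg K X) (α : FreeBimod K X r)
    (hf : f = evalS F α) (hf0 : f ≠ 0)
    (hnotred : ¬ TopSRed G f α) :
    ∀ (g : FreeAlg K X) (β σ : FreeBimod K X r), ((g, β) ∈ G ∨ (g, β) = (f, α)) →
      (RegSPol f α g β σ ∨ RegSPol g β f α σ) → sigW α < sigW σ := by
  intro g β σ hmem hsp
  have hα : α ≠ 0 := by
    rintro rfl
    exact hf0 (by simp [hf, evalS])
  have hg : g ≠ 0 := hmem.elim (fun h => (hG _ h).2) fun h => (Prod.mk.inj h).1 ▸ hf0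
  have hirred : g ≠ f → ¬ TopSRed {(g, β)} f α := fun hgf hred =>
    hnotred <| hred.mono <| Set.singleton_subset_iff.2 <|
      hmem.resolve_right fun h => hgf (Prod.mk.inj h).1
  exact hsp.elim (sigW_lt_of_regSPol_left hmod hf0 hg hα (hirred ∘ Ne.symm))
    (sigW_lt_of_regSPol_right hmod hf0 hg hα hirred)

/-- If `f^[α] ∈ I^[Σ]` is not top s-reducible by `G^[Σ]`, then every regular
S-polynomial formed between `f^[α]` and any element of `G^[Σ] ∪ {f^[α]}` has signature
strictly larger than `s(α)`. -/
theorem sig_spol_gt_of_not_topSRed {K X : Type*} [Field K] {r : ℕ}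
    [LinearOrder (FreeMonoid X)] [WellFoundedLT (FreeMonoid X)]
    [LinearOrder (MonMod X r)] [WellFoundedLT (MonMod X r)]
    (hmon : ∀ a b u v : FreeMonoid X, u ≤ v → a * u * b ≤ a * v * b)
    (hmod : ∀ (a b : FreeMonoid X) (μ ν : MonMod X r), μ ≤ ν → act a b μ ≤ act a b ν)
    (hcomp : ∀ (u v : FreeMonoid X) (i : Fin r),
      (u ≤ v ↔ (⟨u, i, 1⟩ : MonMod X r) ≤ ⟨v, i, 1⟩) ∧
      (u ≤ v ↔ (⟨1, i, u⟩ : MonMod X r) ≤ ⟨1, i, v⟩))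
    (F : Fin r → FreeAlg K X) (G : Set (FreeAlg K X × FreeBimod K X r))
    (hG : InLab F G)
    (f : FreeAlg K X) (α : FreeBimod K X r)
    (hf : f = evalS F α) (hf0 : f ≠ 0)
    (hnotred : ¬ TopSRed G f α) :
    ∀ (g : FreeAlg K X) (β σ : FreeBimod K X r), ((g, β) ∈ G ∨ (g, β) = (f, α)) →
      (RegSPol f α g β σ ∨ RegSPol g β f α σ) → sigW α < sigW σ :=
  sig_spol_gt_of_not_topSRed_general hmod F G hG f α hf hf0 hnotred
end

section
/- Let G^[Σ] be a labelled Gröbner basis of I^[Σ] and suppose some g^[γ] ∈ G^[Σ] is top s-reducible by G^[Σ] \ {g^[γ]}. Then G^[Σ] \ {g^[γ]} is still a labelled Gröbner basis of I^[Σ]. -/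
open Finsupp

/-! Nonzero elements of `I^[Σ]` are top s-reducible by a labelled Gröbner basis: in a chain
s-reducing `f^[α]` to zero, some step must cancel `lm(f)`, with a reducer of signature at most
`s(α)`. Conversely, if every nonzero element is top s-reducible, top s-reductions strictly lower
the leading monomial and well-foundedness carries them to zero. Top s-reducibility is transitive,
because the monomial order and the signature order are compatible with the two-sided action; so
every element top s-reduced by `g^[γ]` is also top s-reduced by whatever top s-reduces `g^[γ]`. -/

section LabelledPolynomials

variable {K X : Type*} [Field K] {r : ℕ}

theorem coeff_mon_mul_mon (a b : FreeMonoid X) (g : FreeAlg K X) :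
    (mon K a * g * mon K b).coeff = Finsupp.mapDomain (fun u => a * u * b) g.coeff := by
  induction g using MonoidAlgebra.induction_linear with
  | zero => simp
  | add x y hx hy =>
    rw [mul_add, add_mul, MonoidAlgebra.coeff_add, hx, hy, MonoidAlgebra.coeff_add,
      Finsupp.mapDomain_add]
  | single u c =>
    simp only [mon, MonoidAlgebra.of_apply, MonoidAlgebra.single_mul_single, one_mul, mul_one,
      MonoidAlgebra.coeff_single, Finsupp.mapDomain_single]

theorem evalS_sub_smul (F : Fin r → FreeAlg K X) (α β : FreeBimod K X r) (c : K) :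
    evalS F (α - c • β) = evalS F α - c • evalS F β := by
  simp only [evalS]
  rw [Finsupp.sum_sub_index fun _ _ _ => sub_smul _ _ _,
    Finsupp.sum_smul_index' fun μ => zero_smul K (mon K μ.left * F μ.idx * mon K μ.right),
    Finsupp.smul_sum]
  simp only [smul_smul, smul_eq_mul]

theorem evalS_mapDomain_act (F : Fin r → FreeAlg K X) (a b : FreeMonoid X)
    (γ : FreeBimod K X r) :
    evalS F (Finsupp.mapDomain (act a b) γ) = mon K a * evalS F γ * mon K b := by
  simp only [evalS]
  rw [Finsupp.sum_mapDomain_index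
      (fun μ => zero_smul K (mon K μ.left * F μ.idx * mon K μ.right)) fun _ _ _ => add_smul _ _ _,
    Finsupp.mul_sum, Finsupp.sum_mul]
  refine Finsupp.sum_congr fun μ _ => ?_
  simp only [act, mon, map_mul, mul_smul_comm, smul_mul_assoc, mul_assoc]

section Signatures

variable [LinearOrder (MonMod X r)]

theorem sigW_sub_smul_le {α β : FreeBimod K X r} {c : K} {s : WithBot (MonMod X r)}
    (hα : sigW α ≤ s) (hβ : sigW β ≤ s) : sigW (α - c • β) ≤ s := by
  classical
  refine Finset.max_le fun μ hμ => ?_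
  rcases Finset.mem_union.mp (Finsupp.support_sub hμ) with h | h
  · exact (Finset.le_max h).trans hα
  · exact (Finset.le_max (Finsupp.support_smul h)).trans hβ

theorem sigW_mapDomain_le {φ : MonMod X r → MonMod X r} (hφ : Monotone φ)
    (γ : FreeBimod K X r) : sigW (Finsupp.mapDomain φ γ) ≤ WithBot.map φ (sigW γ) := by
  classical
  refine Finset.max_le fun ν hν => ?_
  obtain ⟨μ, hμ, rfl⟩ := Finset.mem_image.mp (Finsupp.mapDomain_support hν)
  exact hφ.withBot_map (Finset.le_max hμ)

end Signatures

variable [LinearOrder (FreeMonoid X)]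

theorem lmon_mem_support {g : FreeAlg K X} (hg : g ≠ 0) : lmon g ∈ g.coeff.support := by
  rw [lmon, dif_pos (Finsupp.support_nonempty_iff.mpr (mt MonoidAlgebra.coeff_eq_zero.mp hg))]
  exact Finset.max'_mem _ _

theorem le_lmon {g : FreeAlg K X} {w : FreeMonoid X} (hw : w ∈ g.coeff.support) : w ≤ lmon g := by
  rw [lmon, dif_pos ⟨w, hw⟩]
  exact Finset.le_max' _ _ hw

theorem lcoeff_ne_zero_s12 {g : FreeAlg K X} (hg : g ≠ 0) : lcoeff g ≠ 0 :=
  Finsupp.mem_support_iff.mp (lmon_mem_support hg)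

theorem coeff_mon_mul_mon_lmon (a b : FreeMonoid X) (g : FreeAlg K X) :
    (mon K a * g * mon K b).coeff (a * lmon g * b) = lcoeff g := by
  rw [coeff_mon_mul_mon]
  exact Finsupp.mapDomain_apply (fun _ _ h => mul_left_cancel (mul_right_cancel h)) _ _

theorem le_mul_lmon_mul_of_mem_support (hmon : ∀ a b : FreeMonoid X, Monotone fun u => a * u * b)
    {a b w : FreeMonoid X} {g : FreeAlg K X} (hw : w ∈ (mon K a * g * mon K b).coeff.support) :
    w ≤ a * lmon g * b := by
  classical
  rw [coeff_mon_mul_mon] at hw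
  obtain ⟨u, hu, rfl⟩ := Finset.mem_image.mp (Finsupp.mapDomain_support hw)
  exact hmon a b (le_lmon hu)

section Reduction

variable {f g : FreeAlg K X} {α γ : FreeBimod K X r} {a b : FreeMonoid X}

theorem coeff_sredResult_fst (w : FreeMonoid X) :
    (sredResult f α g γ a b).1.coeff w =
      f.coeff w - f.coeff (a * lmon g * b) * (lcoeff g)⁻¹ * (mon K a * g * mon K b).coeff w := by
  simp only [sredResult, MonoidAlgebra.coeff_sub, MonoidAlgebra.coeff_smul, Finsupp.sub_apply,
    Finsupp.smul_apply, smul_eq_mul]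

theorem mem_support_sredResult_fst {w : FreeMonoid X}
    (hw : w ∈ (sredResult f α g γ a b).1.coeff.support) :
    w ∈ f.coeff.support ∨ w ∈ (mon K a * g * mon K b).coeff.support := by
  classical
  simp only [sredResult, MonoidAlgebra.coeff_sub, MonoidAlgebra.coeff_smul] at hw
  exact (Finset.mem_union.mp (Finsupp.support_sub hw)).imp id fun h => Finsupp.support_smul h

theorem le_of_mem_support_sredResult_fst
    (hmon : ∀ a b : FreeMonoid X, Monotone fun u => a * u * b) {m w : FreeMonoid X}
    (hf : ∀ v ∈ f.coeff.support, v ≤ m) (hm : a * lmon g * b ≤ m)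
    (hw : w ∈ (sredResult f α g γ a b).1.coeff.support) : w ≤ m :=
  (mem_support_sredResult_fst hw).elim (hf w) fun h =>
    (le_mul_lmon_mul_of_mem_support hmon h).trans hm

theorem lmon_sredResult_fst_lt (hmon : ∀ a b : FreeMonoid X, Monotone fun u => a * u * b)
    (hg : g ≠ 0) (hab : a * lmon g * b = lmon f) (hr : (sredResult f α g γ a b).1 ≠ 0) :
    lmon (sredResult f α g γ a b).1 < lmon f := by
  have hmem := lmon_mem_support hr
  refine lt_of_le_of_ne (le_of_mem_support_sredResult_fst hmon (fun _ => le_lmon) hab.le hmem)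
    fun h => Finsupp.mem_support_iff.mp hmem ?_
  rw [h, coeff_sredResult_fst, ← hab, coeff_mon_mul_mon_lmon,
    inv_mul_cancel_right₀ (lcoeff_ne_zero_s12 hg), sub_self]

theorem lmon_sredResult_fst_eq (hmon : ∀ a b : FreeMonoid X, Monotone fun u => a * u * b)
    (hf : f ≠ 0) (hlt : a * lmon g * b < lmon f) :
    (sredResult f α g γ a b).1 ≠ 0 ∧ lmon (sredResult f α g γ a b).1 = lmon f := by
  have hcoeff : (sredResult f α g γ a b).1.coeff (lmon f) = f.coeff (lmon f) := by
    rw [coeff_sredResult_fst, Finsupp.notMem_support_iff.mp fun h =>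
      (le_mul_lmon_mul_of_mem_support hmon h).not_gt hlt, mul_zero, sub_zero]
  have hmem : lmon f ∈ (sredResult f α g γ a b).1.coeff.support := by
    rw [Finsupp.mem_support_iff, hcoeff]
    exact Finsupp.mem_support_iff.mp (lmon_mem_support hf)
  have hr : (sredResult f α g γ a b).1 ≠ 0 := fun h => by simp [h] at hmem
  exact ⟨hr, le_antisymm (le_of_mem_support_sredResult_fst hmon (fun _ => le_lmon) hlt.le
    (lmon_mem_support hr)) (le_lmon hmem)⟩

theorem sredResult_fst_eq_evalS (F : Fin r → FreeAlg K X) (hf : f = evalS F α)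
    (hg : g = evalS F γ) : (sredResult f α g γ a b).1 = evalS F (sredResult f α g γ a b).2 := by
  simp only [sredResult]
  rw [evalS_sub_smul, evalS_mapDomain_act, ← hf, ← hg]

theorem sigW_sredResult_snd_le [LinearOrder (MonMod X r)] (hact : Monotone (act (r := r) a b))
    (h : WithBot.map (act a b) (sigW γ) ≤ sigW α) : sigW (sredResult f α g γ a b).2 ≤ sigW α :=
  sigW_sub_smul_le le_rfl ((sigW_mapDomain_le hact γ).trans h)

end Reduction

variable [LinearOrder (MonMod X r)] {G G' : Set (FreeAlg K X × FreeBimod K X r)}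
  {f : FreeAlg K X} {α : FreeBimod K X r}

theorem TopSRed.of_forall_mem_or_topSRed (hG : ∀ q ∈ G, q ∈ G' ∨ TopSRed G' q.1 q.2)
    (hact : ∀ a b : FreeMonoid X, Monotone (act (r := r) a b)) (h : TopSRed G f α) :
    TopSRed G' f α := by
  obtain ⟨g, γ, hgG, hg0, a, b, hab, hsig⟩ := h
  rcases hG _ hgG with hgG' | ⟨k, δ, hkG', hk0, c, d, hcd, hsig'⟩
  · exact ⟨g, γ, hgG', hg0, a, b, hab, hsig⟩
  refine ⟨k, δ, hkG', hk0, a * c, d * b, by rw [← hab, ← hcd]; simp only [mul_assoc], ?_⟩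
  calc WithBot.map (act (a * c) (d * b)) (sigW δ)
      = WithBot.map (act a b) (WithBot.map (act c d) (sigW δ)) := by
        rw [WithBot.map_map]; congr 1; funext μ; simp only [act, Function.comp, mul_assoc]
    _ ≤ WithBot.map (act a b) (sigW γ) := (hact a b).withBot_map hsig'
    _ ≤ sigW α := hsig

theorem topSRed_of_reflTransGen_sredStep
    (hmon : ∀ a b : FreeMonoid X, Monotone fun u => a * u * b)
    (hact : ∀ a b : FreeMonoid X, Monotone (act (r := r) a b))
    {q : FreeAlg K X × FreeBimod K X r} {σ : FreeBimod K X r}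
    (h : Relation.ReflTransGen (SRedStep G) q (0, σ)) (hq : q.1 ≠ 0) (hlm : lmon q.1 = lmon f)
    (hsig : sigW q.2 ≤ sigW α) : TopSRed G f α := by
  induction h using Relation.ReflTransGen.head_induction_on with
  | refl => exact absurd rfl hq
  | head hstep _ ih =>
    obtain ⟨g, γ, hgG, hg0, a, b, hmem, hsig', rfl⟩ := hstep
    rcases (le_lmon hmem).lt_or_eq with hlt | heq
    · obtain ⟨hr, hlm'⟩ := lmon_sredResult_fst_eq hmon hq hlt
      exact ih hr (hlm'.trans hlm) ((sigW_sredResult_snd_le (hact a b) hsig').trans hsig)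
    · exact ⟨g, γ, hgG, hg0, a, b, heq.trans hlm, hsig'.trans hsig⟩

theorem SRedToZero.topSRed (hmon : ∀ a b : FreeMonoid X, Monotone fun u => a * u * b)
    (hact : ∀ a b : FreeMonoid X, Monotone (act (r := r) a b)) (h : SRedToZero G (f, α))
    (hf : f ≠ 0) : TopSRed G f α :=
  h.elim fun _ hσ => topSRed_of_reflTransGen_sredStep hmon hact hσ hf rfl le_rfl

theorem LabGB.topSRed {F : Fin r → FreeAlg K X}
    (hmon : ∀ a b : FreeMonoid X, Monotone fun u => a * u * b)
    (hact : ∀ a b : FreeMonoid X, Monotone (act (r := r) a b)) (hG : LabGB F G)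
    (hf0 : f ≠ 0) (hf : f = evalS F α) : TopSRed G f α :=
  (hG.2 f α hf).topSRed hmon hact hf0

theorem labGB_of_topSRed [WellFoundedLT (FreeMonoid X)] {F : Fin r → FreeAlg K X}
    (hmon : ∀ a b : FreeMonoid X, Monotone fun u => a * u * b) (hG : InLab F G)
    (htop : ∀ f α, f ≠ 0 → f = evalS F α → TopSRed G f α) : LabGB F G := by
  refine ⟨hG, fun f α hf => ?_⟩
  induction hw : lmon f using WellFoundedLT.induction generalizing f α with
  | _ w ih =>
    by_cases hf0 : f = 0
    · exact ⟨α, hf0 ▸ .refl⟩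
    obtain ⟨g, γ, hgG, hg0, a, b, hab, hsig⟩ := htop f α hf0 hf
    set q := sredResult f α g γ a b
    have hstep : SRedStep G (f, α) q :=
      ⟨g, γ, hgG, hg0, a, b, hab ▸ lmon_mem_support hf0, hsig, rfl⟩
    obtain ⟨σ, hσ⟩ : SRedToZero G q := by
      by_cases hq0 : q.1 = 0
      · exact ⟨q.2, by rw [← hq0]⟩
      · exact ih _ (hw ▸ lmon_sredResult_fst_lt hmon hg0 hab hq0) q.1 q.2
          (sredResult_fst_eq_evalS F hf (hG _ hgG).1) rfl
    exact ⟨σ, .head hstep hσ⟩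

end LabelledPolynomials

theorem labGB_remove_topSRedible_general {K X : Type*} [Field K] {r : ℕ}
    [LinearOrder (FreeMonoid X)] [WellFoundedLT (FreeMonoid X)]
    [LinearOrder (MonMod X r)]
    (hmon : ∀ a b u v : FreeMonoid X, u ≤ v → a * u * b ≤ a * v * b)
    (hmod : ∀ (a b : FreeMonoid X) (μ ν : MonMod X r), μ ≤ ν → act a b μ ≤ act a b ν)
    (F : Fin r → FreeAlg K X) (G : Set (FreeAlg K X × FreeBimod K X r))
    (hG : LabGB F G) (p : FreeAlg K X × FreeBimod K X r)
    (hred : TopSRed (G \ {p}) p.1 p.2) :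
    LabGB F (G \ {p}) := by
  have hmon' : ∀ a b : FreeMonoid X, Monotone fun u => a * u * b := fun a b _ _ => hmon a b _ _
  have hact : ∀ a b : FreeMonoid X, Monotone (act (r := r) a b) := fun a b _ _ => hmod a b _ _
  have hreduce : ∀ q ∈ G, q ∈ G \ {p} ∨ TopSRed (G \ {p}) q.1 q.2 := fun q hq => by
    by_cases hqp : q = p
    · exact .inr (hqp ▸ hred)
    · exact .inl ⟨hq, hqp⟩
  exact labGB_of_topSRed hmon' (fun q hq => hG.1 q hq.1) fun f α hf0 hf =>
    (hG.topSRed hmon' hact hf0 hf).of_forall_mem_or_topSRed hreduce hact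

/-- If `G^[Σ]` is a labelled Gröbner basis of `I^[Σ]` and some `g^[γ] ∈ G^[Σ]` is top
s-reducible by `G^[Σ] \ {g^[γ]}`, then `G^[Σ] \ {g^[γ]}` is still a labelled Gröbner
basis of `I^[Σ]`. -/
theorem labGB_remove_topSRedible {K X : Type*} [Field K] {r : ℕ}
    [LinearOrder (FreeMonoid X)] [WellFoundedLT (FreeMonoid X)]
    [LinearOrder (MonMod X r)] [WellFoundedLT (MonMod X r)]
    (hmon : ∀ a b u v : FreeMonoid X, u ≤ v → a * u * b ≤ a * v * b)
    (hmod : ∀ (a b : FreeMonoid X) (μ ν : MonMod X r), μ ≤ ν → act a b μ ≤ act a b ν)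
    (hcomp : ∀ (u v : FreeMonoid X) (i : Fin r),
      (u ≤ v ↔ (⟨u, i, 1⟩ : MonMod X r) ≤ ⟨v, i, 1⟩) ∧
      (u ≤ v ↔ (⟨1, i, u⟩ : MonMod X r) ≤ ⟨1, i, v⟩))
    (F : Fin r → FreeAlg K X) (G : Set (FreeAlg K X × FreeBimod K X r))
    (hG : LabGB F G) (p : FreeAlg K X × FreeBimod K X r) (hp : p ∈ G)
    (hred : TopSRed (G \ {p}) p.1 p.2) :
    LabGB F (G \ {p}) :=
  labGB_remove_topSRedible_general hmon hmod F G hG p hred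
end
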